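/- In the even-case abstract algebra of integrals, the functions F̃_i = F_{m−i} − F_1 G_i/G_{m−1} and G̃_i = G_i/G_{m−1} (i = 1,...,m−2) satisfy {G̃_i, F̃_j} = G̃_j F̃_i if i ≥ j and {G̃_i, F̃_j} = G̃_i F̃_j if i < j. -/

import Mathlib

noncomputable def pd {n : ℕ} (i : Fin n) (f : (Fin n → ℝ) → ℝ) (x : Fin n → ℝ) : ℝ :=
  fderiv ℝ f x (Pi.single i 1)

noncomputable def pb {n : ℕ} (P : Fin n → Fin n → (Fin n → ℝ) → ℝ)
    (f g : (Fin n → ℝ) → ℝ) (x : Fin n → ℝ) : ℝ :=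
  ∑ i : Fin n, ∑ j : Fin n, P i j x * pd i f x * pd j g x

def get {n : ℕ} (x : Fin n → ℝ) (i : ℕ) : ℝ := if h : i < n then x ⟨i, h⟩ else 0

/- Abstract even-case algebra of integrals: `2m-1` independent variables,
coordinate `0` is `H`, coordinates `1,…,m-1` are `F_1,…,F_{m-1}` and
coordinates `m,…,2m-2` are `G_1,…,G_{m-1}` (`G_j` at index `(m-1)+j`). -/

/-- The value of the bracket `{F_i, G_j}`:
`-F_i G_j` if `κ(i,j) = i+j-m-1 < 0`, and `-F_{m-j} G_{m-i}` otherwise. -/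
noncomputable def peFG (m i j : ℕ) (y : Fin (2*m-1) → ℝ) : ℝ :=
  if i + j < m + 1 then -(get y i * get y ((m-1)+j))
  else -(get y (m-j) * get y ((m-1)+(m-i)))

/-- The even-case structure matrix: `{H,·} = 0`, `{F_i,F_j} = {G_i,G_j} = 0`, and
`{F_i,G_j}` as in `peFG`, extended antisymmetrically. -/
noncomputable def Pe (m : ℕ) : Fin (2*m-1) → Fin (2*m-1) → (Fin (2*m-1) → ℝ) → ℝ :=
  fun a b y =>
    if 1 ≤ (a:ℕ) ∧ (a:ℕ) ≤ m-1 ∧ m ≤ (b:ℕ) then peFG m (a:ℕ) ((b:ℕ)-(m-1)) y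
    else if 1 ≤ (b:ℕ) ∧ (b:ℕ) ≤ m-1 ∧ m ≤ (a:ℕ) then -(peFG m (b:ℕ) ((a:ℕ)-(m-1)) y)
    else 0

/-- `F̃_i = F_{m-i} - F_1 G_i / G_{m-1}`. -/
noncomputable def Ftil (m i : ℕ) : (Fin (2*m-1) → ℝ) → ℝ := fun y =>
  get y (m-i) - get y 1 * get y ((m-1)+i) / get y ((m-1)+(m-1))

/-- `G̃_i = G_i / G_{m-1}`. -/
noncomputable def Gtil (m i : ℕ) : (Fin (2*m-1) → ℝ) → ℝ := fun y =>
  get y ((m-1)+i) / get y ((m-1)+(m-1))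

section aux
variable {n : ℕ} {f g : (Fin n → ℝ) → ℝ} {x : Fin n → ℝ}

lemma diff_coord (p : Fin n) (x : Fin n → ℝ) :
    DifferentiableAt ℝ (fun y : Fin n → ℝ => y p) x :=
  (ContinuousLinearMap.proj p : (Fin n → ℝ) →L[ℝ] ℝ).differentiableAt

lemma pd_coord (a p : Fin n) (x : Fin n → ℝ) :
    pd a (fun y => y p) x = if p = a then 1 else 0 := by
  have : fderiv ℝ (fun y : Fin n → ℝ => y p) x = ContinuousLinearMap.proj p :=
    (ContinuousLinearMap.proj p : (Fin n → ℝ) →L[ℝ] ℝ).fderiv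
  simp [pd, this, Pi.single_apply]

lemma diffAt_div (hf : DifferentiableAt ℝ f x) (hg : DifferentiableAt ℝ g x)
    (hx : g x ≠ 0) : DifferentiableAt ℝ (fun y => f y / g y) x := by
  simp only [div_eq_mul_inv]; exact hf.mul (hg.inv hx)

lemma pd_mul (a : Fin n) (hf : DifferentiableAt ℝ f x) (hg : DifferentiableAt ℝ g x) :
    pd a (fun y => f y * g y) x = f x * pd a g x + g x * pd a f x := by
  simp [pd, fderiv_fun_mul hf hg]

lemma pd_sub (a : Fin n) (hf : DifferentiableAt ℝ f x) (hg : DifferentiableAt ℝ g x) :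
    pd a (fun y => f y - g y) x = pd a f x - pd a g x := by
  simp [pd, fderiv_fun_sub hf hg]

lemma pd_inv (a : Fin n) (hg : DifferentiableAt ℝ g x) (hx : g x ≠ 0) :
    pd a (fun y => (g y)⁻¹) x = -(pd a g x) / (g x)^2 := by
  have h : HasFDerivAt (fun y => (g y)⁻¹)
      ((-ContinuousLinearMap.mulLeftRight ℝ ℝ (g x)⁻¹ (g x)⁻¹).comp (fderiv ℝ g x)) x :=
    (hasFDerivAt_inv' hx).comp x hg.hasFDerivAt
  rw [pd, h.fderiv]
  simp only [ContinuousLinearMap.comp_apply, ContinuousLinearMap.neg_apply,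
    ContinuousLinearMap.mulLeftRight_apply]
  rw [← pd, neg_div, div_eq_mul_inv, pow_two, mul_inv]
  ring

lemma pd_div (a : Fin n) (hf : DifferentiableAt ℝ f x) (hg : DifferentiableAt ℝ g x)
    (hx : g x ≠ 0) :
    pd a (fun y => f y / g y) x = (pd a f x * g x - f x * pd a g x) / (g x)^2 := by
  have : (fun y => f y / g y) = fun y => f y * (g y)⁻¹ := by
    funext y; rw [div_eq_mul_inv]
  rw [this, pd_mul a hf (hg.fun_inv hx), pd_inv a hg hx]
  field_simp
  ring

lemma sum_ite_apply (c : Fin n → ℝ) (p : Fin n) (u : ℝ) :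
    ∑ b : Fin n, c b * (if p = b then u else 0) = c p * u := by
  simp [mul_ite]

lemma sum_ite_mid (c : Fin n → ℝ) (p : Fin n) (u d : ℝ) :
    ∑ a : Fin n, c a * (if p = a then u else 0) * d = c p * u * d := by
  rw [← Finset.sum_mul, sum_ite_apply]

end aux

set_option maxHeartbeats 2000000 in
/-- In the even-case abstract algebra of integrals,
`{G̃_i, F̃_j} = G̃_j F̃_i` if `i ≥ j` and `{G̃_i, F̃_j} = G̃_i F̃_j` if `i < j`,
for `i, j = 1, …, m-2`. -/
theorem even_tilde_brackets (m : ℕ) (hm : 3 ≤ m) (i j : ℕ)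
    (hi1 : 1 ≤ i) (hi2 : i ≤ m-2) (hj1 : 1 ≤ j) (hj2 : j ≤ m-2)
    (y : Fin (2*m-1) → ℝ) (hG : get y ((m-1)+(m-1)) ≠ 0) :
    (j ≤ i → pb (Pe m) (Gtil m i) (Ftil m j) y = Gtil m j y * Ftil m i y) ∧
    (i < j → pb (Pe m) (Gtil m i) (Ftil m j) y = Gtil m i y * Ftil m j y) := by
  obtain ⟨gi, hgi⟩ : ∃ a : Fin (2*m-1), (a:ℕ) = (m-1)+i := ⟨⟨_, by omega⟩, rfl⟩
  obtain ⟨gj, hgj⟩ : ∃ a : Fin (2*m-1), (a:ℕ) = (m-1)+j := ⟨⟨_, by omega⟩, rfl⟩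
  obtain ⟨gm1, hgm1⟩ : ∃ a : Fin (2*m-1), (a:ℕ) = (m-1)+(m-1) := ⟨⟨_, by omega⟩, rfl⟩
  obtain ⟨fA, hfA⟩ : ∃ a : Fin (2*m-1), (a:ℕ) = m-j := ⟨⟨_, by omega⟩, rfl⟩
  obtain ⟨fB, hfB⟩ : ∃ a : Fin (2*m-1), (a:ℕ) = m-i := ⟨⟨_, by omega⟩, rfl⟩
  obtain ⟨f1, hf1⟩ : ∃ a : Fin (2*m-1), (a:ℕ) = 1 := ⟨⟨_, by omega⟩, rfl⟩
  have hgetf : ∀ (z : Fin (2*m-1) → ℝ) (a : Fin (2*m-1)) (k : ℕ), (a:ℕ) = k → get z k = z a := by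
    intro z a k hk; subst hk
    rw [show _root_.get z (a:ℕ) = z ⟨(a:ℕ), a.isLt⟩ from dif_pos a.isLt, Fin.eta]
  have hne : ∀ (a b : Fin (2*m-1)), (a:ℕ) ≠ (b:ℕ) → a ≠ b :=
    fun a b h hab => h (congrArg Fin.val hab)
  have n_gigm : gi ≠ gm1 := hne _ _ (by rw [hgi, hgm1]; omega)
  have n_f1fA : f1 ≠ fA := hne _ _ (by rw [hf1, hfA]; omega)
  have n_gjfA : gj ≠ fA := hne _ _ (by rw [hgj, hfA]; omega)
  have n_gmfA : gm1 ≠ fA := hne _ _ (by rw [hgm1, hfA]; omega)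
  have n_gjf1 : gj ≠ f1 := hne _ _ (by rw [hgj, hf1]; omega)
  have n_gmf1 : gm1 ≠ f1 := hne _ _ (by rw [hgm1, hf1]; omega)
  have n_gmgj : gm1 ≠ gj := hne _ _ (by rw [hgm1, hgj]; omega)
  have hGm : y gm1 ≠ 0 := by rwa [hgetf y gm1 _ hgm1] at hG
  have hdc : ∀ p : Fin (2*m-1), DifferentiableAt ℝ (fun z : Fin (2*m-1) → ℝ => z p) y :=
    fun p => diff_coord p y
  -- function-level forms
  have hGt_i : Gtil m i = fun z => z gi / z gm1 := by
    funext z; simp only [Gtil]; rw [hgetf z gi _ hgi, hgetf z gm1 _ hgm1]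
  have hFt_j : Ftil m j = fun z => z fA - z f1 * z gj / z gm1 := by
    funext z; simp only [Ftil]
    rw [hgetf z fA _ hfA, hgetf z f1 _ hf1, hgetf z gj _ hgj, hgetf z gm1 _ hgm1]
  -- value-level forms
  have hGy_i : Gtil m i y = y gi / y gm1 := by rw [hGt_i]
  have hGy_j : Gtil m j y = y gj / y gm1 := by
    simp only [Gtil]; rw [hgetf y gj _ hgj, hgetf y gm1 _ hgm1]
  have hFy_j : Ftil m j y = y fA - y f1 * y gj / y gm1 := by rw [hFt_j]
  have hFy_i : Ftil m i y = y fB - y f1 * y gi / y gm1 := by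
    simp only [Ftil]
    rw [hgetf y fB _ hfB, hgetf y f1 _ hf1, hgetf y gi _ hgi, hgetf y gm1 _ hgm1]
  -- partial derivatives
  have hpdG : ∀ a, pd a (Gtil m i) y =
      ((if gi = a then 1 else 0) * y gm1 - y gi * (if gm1 = a then 1 else 0)) / (y gm1)^2 := by
    intro a
    rw [hGt_i, pd_div a (hdc gi) (hdc gm1) hGm, pd_coord, pd_coord]
  have hpdF : ∀ b, pd b (Ftil m j) y =
      (if fA = b then 1 else 0) -
        ((y f1 * (if gj = b then 1 else 0) + y gj * (if f1 = b then 1 else 0)) * y gm1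
          - y f1 * y gj * (if gm1 = b then 1 else 0)) / (y gm1)^2 := by
    intro b
    rw [hFt_j, pd_sub b (hdc fA) (diffAt_div ((hdc f1).fun_mul (hdc gj)) (hdc gm1) hGm),
      pd_coord, pd_div b ((hdc f1).fun_mul (hdc gj)) (hdc gm1) hGm,
      pd_mul b (hdc f1) (hdc gj), pd_coord, pd_coord, pd_coord]
  have hpdG' : ∀ a, pd a (Gtil m i) y =
      (if gi = a then y gm1/(y gm1)^2 else 0) + (if gm1 = a then -(y gi)/(y gm1)^2 else 0) := by
    intro a; rw [hpdG a]
    by_cases h1 : gi = a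
    · subst h1
      simp [Ne.symm n_gigm]
    · simp only [if_neg h1]
      by_cases h2 : gm1 = a
      · simp only [if_pos h2]; ring
      · simp only [if_neg h2]; ring
  have hpdF' : ∀ b, pd b (Ftil m j) y =
      (if fA = b then 1 else 0)
      + (if f1 = b then -(y gj * y gm1)/(y gm1)^2 else 0)
      + (if gj = b then -(y f1 * y gm1)/(y gm1)^2 else 0)
      + (if gm1 = b then y f1 * y gj/(y gm1)^2 else 0) := by
    intro b; rw [hpdF b]
    by_cases h1 : fA = b
    · subst h1
      simp [n_f1fA, n_gjfA, n_gmfA]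
    · simp only [if_neg h1]
      by_cases h2 : f1 = b
      · subst h2
        simp [n_f1fA, n_gjf1, n_gmf1, h1]
        ring
      · simp only [if_neg h2]
        by_cases h3 : gj = b
        · subst h3
          simp [n_gmgj, h1, h2]
          ring
        · simp only [if_neg h3]
          by_cases h4 : gm1 = b
          · simp only [if_pos h4]; ring
          · simp only [if_neg h4]; ring
  -- collapse the double sum
  have hpb : pb (Pe m) (Gtil m i) (Ftil m j) y =
      Pe m gi fA y * (y gm1/(y gm1)^2) * 1
      + Pe m gi f1 y * (y gm1/(y gm1)^2) * (-(y gj * y gm1)/(y gm1)^2)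
      + Pe m gi gj y * (y gm1/(y gm1)^2) * (-(y f1 * y gm1)/(y gm1)^2)
      + Pe m gi gm1 y * (y gm1/(y gm1)^2) * (y f1 * y gj/(y gm1)^2)
      + Pe m gm1 fA y * (-(y gi)/(y gm1)^2) * 1
      + Pe m gm1 f1 y * (-(y gi)/(y gm1)^2) * (-(y gj * y gm1)/(y gm1)^2)
      + Pe m gm1 gj y * (-(y gi)/(y gm1)^2) * (-(y f1 * y gm1)/(y gm1)^2)
      + Pe m gm1 gm1 y * (-(y gi)/(y gm1)^2) * (y f1 * y gj/(y gm1)^2) := by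
    simp only [pb, hpdG', hpdF', mul_add, add_mul, Finset.sum_add_distrib,
      sum_ite_apply, sum_ite_mid]
    ring
  -- values of Pe
  have e1 : (m-1)+i-(m-1) = i := by omega
  have e2 : (m-1)+(m-1)-(m-1) = m-1 := by omega
  have P1 : Pe m gi fA y = if i ≤ j then y fA * y gi else y fB * y gj := by
    simp only [Pe]
    rw [hgi, hfA, if_neg (by omega), if_pos (by omega), e1, peFG]
    rcases le_or_gt i j with hle | hlt
    · rw [if_pos (by omega), if_pos hle, hgetf y fA _ hfA, hgetf y gi _ hgi, neg_neg]
    · rw [if_neg (by omega), if_neg (by omega)]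
      have e3 : m-(m-j) = j := by omega
      rw [e3, hgetf y fB _ hfB, hgetf y gj _ hgj, neg_neg]
  have P2 : Pe m gi f1 y = y f1 * y gi := by
    simp only [Pe]
    rw [hgi, hf1, if_neg (by omega), if_pos (by omega), e1, peFG,
      if_pos (by omega), hgetf y f1 _ hf1, hgetf y gi _ hgi, neg_neg]
  have P3 : Pe m gi gj y = 0 := by
    simp only [Pe]; rw [hgi, hgj, if_neg (by omega), if_neg (by omega)]
  have P4 : Pe m gi gm1 y = 0 := by
    simp only [Pe]; rw [hgi, hgm1, if_neg (by omega), if_neg (by omega)]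
  have P5 : Pe m gm1 fA y = y f1 * y gj := by
    simp only [Pe]
    rw [hgm1, hfA, if_neg (by omega), if_pos (by omega), e2, peFG, if_neg (by omega)]
    have e3 : m-(m-1) = 1 := by omega
    have e4 : m-(m-j) = j := by omega
    rw [e3, e4, hgetf y f1 _ hf1, hgetf y gj _ hgj, neg_neg]
  have P6 : Pe m gm1 f1 y = y f1 * y gm1 := by
    simp only [Pe]
    rw [hgm1, hf1, if_neg (by omega), if_pos (by omega), e2, peFG, if_pos (by omega),
      hgetf y f1 _ hf1, hgetf y gm1 _ hgm1, neg_neg]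
  have P7 : Pe m gm1 gj y = 0 := by
    simp only [Pe]; rw [hgm1, hgj, if_neg (by omega), if_neg (by omega)]
  have P8 : Pe m gm1 gm1 y = 0 := by
    simp only [Pe]; rw [hgm1, if_neg (by omega), if_neg (by omega)]
  rcases lt_trichotomy i j with hij | hij | hij
  · refine ⟨fun h => absurd h (by omega), fun _ => ?_⟩
    rw [hpb, P1, if_pos hij.le, P2, P3, P4, P5, P6, P7, P8, hGy_i, hFy_j]
    field_simp
    ring
  · subst hij
    have hAB : fA = fB := Fin.val_injective (by rw [hfA, hfB])
    have hJI : gj = gi := Fin.val_injective (by rw [hgj, hgi])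
    constructor <;> intro _ <;>
      · rw [hpb, P1, if_pos le_rfl, P2, P3, P4, P5, P6, P7, P8, hGy_j, hFy_i, hAB, hJI]
        field_simp
        ring
  · refine ⟨fun _ => ?_, fun h => absurd h (by omega)⟩
    rw [hpb, P1, if_neg (by omega), P2, P3, P4, P5, P6, P7, P8, hGy_j, hFy_i]
    field_simp
    ring
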